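/- For the fundamental metric g of the 2D-monolayer Lagrangian, the temporal Cartan coefficients G^k_{j1} = (g^{ks}/2)·∂g_{sj}/∂t satisfy G^1_{11} = 2p r⁴ |V|² / (2p r⁵ |V| − m ṙ³ e^{−2|V|t/r}) and G^1_{21} = G^2_{11} = G^2_{21} = 0, at every point with r > 0, ṙ ≠ 0 and g₁₁ ≠ 0. -/

import Mathlib

/-- The fundamental metrical d-tensor g_{ij} of the 2D-monolayer Lagrangian. -/
noncomputable def gE (m p V : ℝ) (i j : Fin 2) (t r φ rd φd : ℝ) : ℝ :=
  if i = 0 ∧ j = 0 then (m - 2 * p * r ^ 5 * |V| * Real.exp (2 * |V| * t / r) * (rd ^ 3)⁻¹) / 2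
  else if i = 1 ∧ j = 1 then m * r ^ 2 / 2 else 0

/-- The inverse fundamental metric g^{ij}. -/
noncomputable def gI (m p V : ℝ) (i j : Fin 2) (t r φ rd φd : ℝ) : ℝ :=
  if i = 0 ∧ j = 0 then 2 / (m - 2 * p * r ^ 5 * |V| * Real.exp (2 * |V| * t / r) * (rd ^ 3)⁻¹)
  else if i = 1 ∧ j = 1 then 2 / (m * r ^ 2) else 0

/-- The canonical nonlinear connection components N^{(q)}_{(1)k}. -/
noncomputable def NN (m p V : ℝ) (𝒰 : ℝ → ℝ → ℝ) (q k : Fin 2) (t r φ rd φd : ℝ) : ℝ :=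
  if q = 0 then
    if k = 0 then
      -|V| / (2 * r) + (2 * |V| * t / r ^ 2 - 5 / r) * rd - 𝒰 t r * rd ^ 2
        + 3 * m * Real.exp (-(2 * |V| * t) / r) / (4 * p * |V| * r ^ 4) * rd ^ 2 * φd ^ 2
    else m * Real.exp (-(2 * |V| * t) / r) / (2 * p * |V| * r ^ 4) * rd ^ 3 * φd
  else if k = 0 then φd / r else rd / r

/-- Partial derivative ∂F/∂x^k, with (x¹,x²) = (r,φ). -/
noncomputable def dx (k : Fin 2) (F : ℝ → ℝ → ℝ → ℝ → ℝ → ℝ) (t r φ rd φd : ℝ) : ℝ :=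
  if k = 0 then deriv (fun a => F t a φ rd φd) r else deriv (fun a => F t r a rd φd) φ

/-- Partial derivative ∂F/∂y^k, with (y¹,y²) = (ṙ,φ̇). -/
noncomputable def dy (k : Fin 2) (F : ℝ → ℝ → ℝ → ℝ → ℝ → ℝ) (t r φ rd φd : ℝ) : ℝ :=
  if k = 0 then deriv (fun a => F t r φ a φd) rd else deriv (fun a => F t r φ rd a) φd

/-- Horizontal derivative δF/δx^k = ∂F/∂x^k − N^{(q)}_{(1)k}·∂F/∂y^q. -/
noncomputable def del (m p V : ℝ) (𝒰 : ℝ → ℝ → ℝ) (k : Fin 2)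
    (F : ℝ → ℝ → ℝ → ℝ → ℝ → ℝ) (t r φ rd φd : ℝ) : ℝ :=
  dx k F t r φ rd φd - ∑ q : Fin 2, NN m p V 𝒰 q k t r φ rd φd * dy q F t r φ rd φd

/-- Temporal Cartan coefficients G^k_{j1} = (g^{ks}/2)·∂g_{sj}/∂t. -/
noncomputable def Gtime (m p V : ℝ) (k j : Fin 2) (t r φ rd φd : ℝ) : ℝ :=
  ∑ s : Fin 2, gI m p V k s t r φ rd φd / 2 * deriv (fun a => gE m p V s j a r φ rd φd) t

/-- Vertical Cartan coefficients C^{i(1)}_{j(k)} = (g^{is}/2)·∂g_{js}/∂y^k. -/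
noncomputable def Cv (m p V : ℝ) (i j k : Fin 2) (t r φ rd φd : ℝ) : ℝ :=
  ∑ s : Fin 2, gI m p V i s t r φ rd φd / 2 * dy k (gE m p V j s) t r φ rd φd

/-- Spatial Cartan coefficients
L^i_{jk} = (g^{is}/2)·(δg_{js}/δx^k + δg_{ks}/δx^j − δg_{jk}/δx^s). -/
noncomputable def Lc (m p V : ℝ) (𝒰 : ℝ → ℝ → ℝ) (i j k : Fin 2) (t r φ rd φd : ℝ) : ℝ :=
  ∑ s : Fin 2, gI m p V i s t r φ rd φd / 2 *
    (del m p V 𝒰 k (gE m p V j s) t r φ rd φd + del m p V 𝒰 j (gE m p V k s) t r φ rd φd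
      - del m p V 𝒰 s (gE m p V j k) t r φ rd φd)

/-- the temporal Cartan coefficients of the 2D-monolayer metric. -/
theorem stmt6 (m p V : ℝ) (hm : 0 < m) (hp : 0 < p) (hV : V ≠ 0)
    (t r φ rd φd : ℝ) (hr : 0 < r) (hrd : rd ≠ 0)
    (hg11 : (m - 2 * p * r ^ 5 * |V| * Real.exp (2 * |V| * t / r) * (rd ^ 3)⁻¹) / 2 ≠ 0) :
    Gtime m p V 0 0 t r φ rd φd
        = 2 * p * r ^ 4 * |V| ^ 2
          / (2 * p * r ^ 5 * |V| - m * rd ^ 3 * Real.exp (-(2 * |V| * t) / r))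
      ∧ Gtime m p V 0 1 t r φ rd φd = 0
      ∧ Gtime m p V 1 0 t r φ rd φd = 0
      ∧ Gtime m p V 1 1 t r φ rd φd = 0 := by
  have hE : Real.exp (2 * |V| * t / r) ≠ 0 := Real.exp_ne_zero _
  have hEneg : Real.exp (-(2 * |V| * t) / r) = (Real.exp (2 * |V| * t / r))⁻¹ := by
    rw [← Real.exp_neg]; ring_nf
  have hD : m - 2 * p * r ^ 5 * |V| * Real.exp (2 * |V| * t / r) * (rd ^ 3)⁻¹ ≠ 0 := by
    intro h; exact hg11 (by rw [h]; ring)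
  have hd : deriv (fun a => gE m p V 0 0 a r φ rd φd) t
      = -(2 * p * r ^ 4 * |V| ^ 2 * Real.exp (2 * |V| * t / r) * (rd ^ 3)⁻¹) := by
    have h1 : HasDerivAt (fun a : ℝ => 2 * |V| * a / r) (2 * |V| / r) t := by
      simpa using ((hasDerivAt_id t).const_mul (2 * |V|)).div_const r
    have h2 := h1.exp
    have h3 := (((h2.const_mul (2 * p * r ^ 5 * |V|)).mul_const ((rd ^ 3)⁻¹)).const_sub m).div_const 2
    have h4 : HasDerivAt (fun a => gE m p V 0 0 a r φ rd φd)
        (-(2 * p * r ^ 5 * |V| * (Real.exp (2 * |V| * t / r) * (2 * |V| / r)) * (rd ^ 3)⁻¹) / 2) t := by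
      simpa [gE] using h3
    rw [h4.deriv]
    field_simp
  have hconst : ∀ (s j : Fin 2), ¬(s = 0 ∧ j = 0) →
      deriv (fun a => gE m p V s j a r φ rd φd) t = 0 := by
    intro s j h
    have : (fun a => gE m p V s j a r φ rd φd) = fun _ => gE m p V s j t r φ rd φd := by
      funext a; simp only [gE, if_neg h]
    rw [this, deriv_const]
  refine ⟨?_, ?_, ?_, ?_⟩
  · simp only [Gtime, Fin.sum_univ_two, hd,
      hconst 1 0 (by decide), gI]
    norm_num
    rw [hEneg]
    have hD2 : 2 * p * r ^ 5 * |V| - m * rd ^ 3 * (Real.exp (2 * |V| * t / r))⁻¹ ≠ 0 := by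
      intro h
      apply hD
      have h' : 2 * p * r ^ 5 * |V| = m * rd ^ 3 * (Real.exp (2 * |V| * t / r))⁻¹ :=
        sub_eq_zero.mp h
      rw [sub_eq_zero, h']
      field_simp
    rw [show -(2 / (m - 2 * p * r ^ 5 * |V| * Real.exp (2 * |V| * t / r) * (rd ^ 3)⁻¹) / 2 *
          (2 * p * r ^ 4 * V ^ 2 * Real.exp (2 * |V| * t / r) * (rd ^ 3)⁻¹))
        = (-(2 * p * r ^ 4 * V ^ 2 * Real.exp (2 * |V| * t / r) * (rd ^ 3)⁻¹))
          / (m - 2 * p * r ^ 5 * |V| * Real.exp (2 * |V| * t / r) * (rd ^ 3)⁻¹) by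
        ring]
    rw [div_eq_div_iff hD hD2]
    field_simp
    ring
  · simp only [Gtime, Fin.sum_univ_two, hconst 0 1 (by decide), hconst 1 1 (by decide)]
    ring
  · simp only [Gtime, Fin.sum_univ_two, hd, hconst 1 0 (by decide), gI]
    norm_num
  · simp only [Gtime, Fin.sum_univ_two, hconst 0 1 (by decide), hconst 1 1 (by decide)]
    ring
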